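/- Let X be a non-singular simplicial set and x an n-simplex of X with xε_k = xε_l for some k < l. Then the degenerate part x♭ of x factors (uniquely) through the degeneracy operator σ_k ∘ ... ∘ σ_{l-1} : [n] → [n-(l-k)]. -/

import Mathlib

open CategoryTheory Simplicial Opposite MonoidalCategory Limits

/-- The representing map of a simplex is degreewise injective. -/
def SSet.RepInj (X : SSet.{0}) {n : ℕ} (x : X _⦋n⦌) : Prop :=
  ∀ m : SimplexCategoryᵒᵖ, Function.Injective (((SSet.yonedaEquiv (X := X) (n := ⦋n⦌)).symm x).app m)

/-- The `i`-th vertex `x εᵢ` of a simplex. -/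
def SSet.vert (X : SSet.{0}) {n : ℕ} (x : X _⦋n⦌) (i : Fin (n + 1)) : X _⦋0⦌ :=
  X.map (SimplexCategory.const ⦋0⦌ ⦋n⦌ i).op x

/-- A simplex is degenerate if it is obtained from a simplex of strictly
lower degree by the action of an operator. -/
def SSet.IsDegenerate (X : SSet.{0}) {n : ℕ} (x : X _⦋n⦌) : Prop :=
  ∃ (m : ℕ) (_ : m < n) (α : (⦋n⦌ : SimplexCategory) ⟶ ⦋m⦌) (y : X _⦋m⦌),
    X.map α.op y = x

/-- A simplicial set is non-singular if every non-degenerate simplex has a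
degreewise injective representing map. -/
def SSet.NonSingular (X : SSet.{0}) : Prop :=
  ∀ (n : ℕ) (x : X _⦋n⦌), ¬ X.IsDegenerate x → X.RepInj x

/-- The iterated elementary degeneracy operator `σ_k ∘ ⋯ ∘ σ_{k+d-1} : [p+d] → [p]`
(for `k ≤ p`), which collapses the interval `{k, …, k+d}` to `k`. -/
def sigmaIter (k : ℕ) : ∀ (p d : ℕ), k ≤ p → ((⦋p + d⦌ : SimplexCategory) ⟶ ⦋p⦌) := fun p d h => match p, d, h with
  | _, 0, _ => 𝟙 _
  | p, d + 1, h => SimplexCategory.σ ⟨k + d, Nat.lt_succ_of_le (Nat.add_le_add_right h d)⟩ ≫ sigmaIter k p d h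

/-! A non-degenerate simplex `y` of a non-singular simplicial set has an injective representing
map, so its vertices are pairwise distinct. Hence `x = y ρ` and `x ε_k = x ε_{k+d}` force
`ρ k = ρ (k + d)`, so the monotone map `ρ` is constant on `{k, …, k + d}` and factors through
`σ_k ⋯ σ_{k+d-1}`; the factorization is unique because this operator has a section. -/

namespace SSet

variable {X : SSet.{0}}

lemma RepInj.map_injective {n : ℕ} {x : X _⦋n⦌} (hx : X.RepInj x) (m : SimplexCategory) :
    Function.Injective fun f : m ⟶ ⦋n⦌ => X.map f.op x := fun f g hfg =>
  congrArg (stdSimplex.objEquiv (n := ⦋n⦌) (m := op m))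
    (hx (op m) (a₁ := stdSimplex.objEquiv.symm f) (a₂ := stdSimplex.objEquiv.symm g) hfg)

lemma RepInj.vert_injective {n : ℕ} {x : X _⦋n⦌} (hx : X.RepInj x) :
    Function.Injective (X.vert x) := fun i j hij => by
  simpa using congrArg (fun f => f.toOrderHom 0) (hx.map_injective ⦋0⦌ hij)

lemma vert_map {m n : ℕ} (f : (⦋m⦌ : SimplexCategory) ⟶ ⦋n⦌) (x : X _⦋n⦌) (i : Fin (m + 1)) :
    X.vert (X.map f.op x) i = X.vert x (f.toOrderHom i) := by
  simp only [vert, ← Functor.map_comp_apply, ← op_comp, SimplexCategory.const_comp]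

end SSet

lemma SimplexCategory.σ_apply_val {n : ℕ} (j : Fin (n + 1)) (i : Fin (n + 2)) :
    ((σ j).toOrderHom i).val = if j.val < i.val then i.val - 1 else i.val := by
  dsimp [SimplexCategory.σ, Fin.predAboveOrderHom]
  unfold Fin.predAbove
  split <;> rename_i h
  · rw [if_pos (by simpa [Fin.lt_def] using h), Fin.val_pred]
  · rw [if_neg (by simpa [Fin.lt_def] using h), Fin.coe_castPred]

lemma sigmaIter_apply_val (k p d : ℕ) (hk : k ≤ p) (i : Fin (p + d + 1)) :
    ((sigmaIter k p d hk).toOrderHom i).val = min i.val (max k (i.val - d)) := by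
  induction d with
  | zero =>
    simp only [sigmaIter, SimplexCategory.id_toOrderHom, OrderHom.id_coe, id_eq]
    omega
  | succ d ih =>
    have hσ := SimplexCategory.σ_apply_val (n := p + d) ⟨k + d, by omega⟩ i
    simp only [sigmaIter, SimplexCategory.comp_toOrderHom, OrderHom.comp_coe,
      Function.comp_apply, ih] at hσ ⊢
    split_ifs at hσ <;> omega

def sigmaIterSection (k p d : ℕ) : (⦋p⦌ : SimplexCategory) ⟶ ⦋p + d⦌ :=
  SimplexCategory.mkHom
    { toFun := fun i => ⟨if i.val ≤ k then i.val else i.val + d, by split <;> omega⟩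
      monotone' := fun i j hij => by
        simp only [Fin.le_def] at hij ⊢
        split_ifs <;> omega }

lemma sigmaIterSection_apply_val (k p d : ℕ) (i : Fin (p + 1)) :
    ((sigmaIterSection k p d).toOrderHom i).val = if i.val ≤ k then i.val else i.val + d :=
  rfl

lemma sigmaIterSection_comp_sigmaIter (k p d : ℕ) (hk : k ≤ p) :
    sigmaIterSection k p d ≫ sigmaIter k p d hk = 𝟙 _ := by
  ext i : 3
  apply Fin.ext
  simp only [SimplexCategory.comp_toOrderHom, OrderHom.comp_coe, Function.comp_apply,
    sigmaIter_apply_val, sigmaIterSection_apply_val, SimplexCategory.id_toOrderHom,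
    OrderHom.id_coe, id_eq]
  split_ifs <;> omega

/-- A monotone map identifying `k` and `k + d` is constant on `{k, …, k + d}`, the only
place where `sigmaIter ≫ sigmaIterSection` differs from the identity. -/
lemma sigmaIter_comp_sigmaIterSection_comp {k p d : ℕ} (hk : k ≤ p) {Y : SimplexCategory}
    (f : (⦋p + d⦌ : SimplexCategory) ⟶ Y)
    (hf : f.toOrderHom ⟨k, Nat.lt_succ_of_le (Nat.le_add_right_of_le hk)⟩ =
      f.toOrderHom ⟨k + d, Nat.lt_succ_of_le (Nat.add_le_add_right hk d)⟩) :
    sigmaIter k p d hk ≫ sigmaIterSection k p d ≫ f = f := by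
  ext i : 3
  simp only [SimplexCategory.comp_toOrderHom, OrderHom.comp_coe, Function.comp_apply]
  have hi : i.val < p + d + 1 := i.isLt
  by_cases hmid : k < i.val ∧ i.val ≤ k + d
  · have hs : (sigmaIterSection k p d).toOrderHom ((sigmaIter k p d hk).toOrderHom i) =
        ⟨k, by omega⟩ := Fin.ext (by
      simp only [sigmaIterSection_apply_val, sigmaIter_apply_val]
      split_ifs <;> omega)
    rw [hs]
    refine le_antisymm (f.toOrderHom.monotone (Fin.le_def.mpr (by simp only; omega))) ?_
    rw [hf]
    exact f.toOrderHom.monotone (Fin.le_def.mpr hmid.2)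
  · have hs : (sigmaIterSection k p d).toOrderHom ((sigmaIter k p d hk).toOrderHom i) = i :=
      Fin.ext (by
        simp only [sigmaIterSection_apply_val, sigmaIter_apply_val]
        split_ifs <;> omega)
    rw [hs]

theorem existsUnique_eq_sigmaIter_comp {k p d : ℕ} (hk : k ≤ p) {Y : SimplexCategory}
    (f : (⦋p + d⦌ : SimplexCategory) ⟶ Y)
    (hf : f.toOrderHom ⟨k, Nat.lt_succ_of_le (Nat.le_add_right_of_le hk)⟩ =
      f.toOrderHom ⟨k + d, Nat.lt_succ_of_le (Nat.add_le_add_right hk d)⟩) :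
    ∃! τ : (⦋p⦌ : SimplexCategory) ⟶ Y, f = sigmaIter k p d hk ≫ τ :=
  ⟨sigmaIterSection k p d ≫ f, (sigmaIter_comp_sigmaIterSection_comp hk f hf).symm,
    fun τ hτ => by rw [hτ, ← Category.assoc, sigmaIterSection_comp_sigmaIter, Category.id_comp]⟩

/-- Let `X` be a non-singular simplicial set and `x` an `n`-simplex
of `X` with `x ε_k = x ε_l` for some `k < l ≤ n`.  Then the degenerate part `x♭`
of `x` (i.e. the epi `ρ` in the unique Eilenberg–Zilber factorization
`x = (x♯) ρ` with `x♯` non-degenerate) factors uniquely through the degeneracy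
operator `σ_k ∘ ⋯ ∘ σ_{l-1} : [n] → [n-(l-k)]`.  Here we write `n = p + d` and
`l = k + d` with `0 < d` and `k ≤ p`, so that `n - (l - k) = p`. -/
theorem degenerate_part_factors (X : SSet.{0}) (hX : X.NonSingular)
    (k p d : ℕ) (hk : k ≤ p) (x : X _⦋p + d⦌)
    (hx : X.vert x ⟨k, by omega⟩ = X.vert x ⟨k + d, by omega⟩)
    (m : ℕ) (y : X _⦋m⦌) (hy : ¬ X.IsDegenerate y)
    (ρ : (⦋p + d⦌ : SimplexCategory) ⟶ ⦋m⦌)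
    (hxy : X.map ρ.op y = x) :
    ∃! τ : (⦋p⦌ : SimplexCategory) ⟶ ⦋m⦌, ρ = sigmaIter k p d hk ≫ τ := by
  subst hxy
  rw [SSet.vert_map, SSet.vert_map] at hx
  exact existsUnique_eq_sigmaIter_comp hk ρ ((hX m y hy).vert_injective hx)
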